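/- Let s be a grid profile with s_k = s^e_k for all k ≤ n, where 1 ≤ n < P. Then there exists a better response path from s to a grid profile s′ with s′_k = s^e_k for all k ≤ n+1, such that along the path (a) the users departing at s^e_1, …, s^e_n never change their departure times, and (b) every departure-time change is to a time strictly later than s^e_n (so the equilibrated users are never overtaken). -/

import Mathlib

/-- Schedule delay cost function `V(d) = β·max(−d,0) + γ·max(d,0)`. -/
noncomputable def sdc (β γ d : ℝ) : ℝ := β * max (-d) 0 + γ * max d 0

/-- Destination arrival times: `d 0 = s 0`, `d (k+1) = max (d k + m/μ) (s (k+1))`. -/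
noncomputable def arr (m μ : ℝ) (s : ℕ → ℝ) : ℕ → ℝ
  | 0 => s 0
  | k + 1 => max (arr m μ s k + m / μ) (s (k + 1))

/-- Trip cost of the `k`-th departing user. -/
noncomputable def cost (β γ m μ : ℝ) (s : ℕ → ℝ) (k : ℕ) : ℝ :=
  (arr m μ s k - s k) + sdc β γ (arr m μ s k)

/-- A time profile: strictly increasing departure times (0-indexed, users `0,…,P-1`). -/
def IsProfile (P : ℕ) (s : ℕ → ℝ) : Prop := ∀ i, i + 1 < P → s i < s (i + 1)

/-- Equilibrium departure time of the first user. -/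
noncomputable def tminus (P : ℕ) (m μ β γ : ℝ) : ℝ :=
  -(m * ((P : ℝ) - 1) / μ) * (γ / (β + γ))

/-- Equilibrium departure time of the last user. -/
noncomputable def tplus (P : ℕ) (m μ β γ : ℝ) : ℝ :=
  tminus P m μ β γ + m * ((P : ℝ) - 1) / μ

/-- Equilibrium trip cost. -/
noncomputable def rho (P : ℕ) (m μ β γ : ℝ) : ℝ :=
  (m * ((P : ℝ) - 1) / μ) * (β * γ / (β + γ))

/-- The equilibrium profile `s^e` (0-indexed: index `k` is the `(k+1)`-st departing user). -/
noncomputable def se (P : ℕ) (m μ β γ : ℝ) (k : ℕ) : ℝ :=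
  if (k : ℤ) ≤ ⌊γ * ((P : ℝ) - 1) / (β + γ)⌋ then
    tminus P m μ β γ + (m * (1 - β) / μ) * (k : ℝ)
  else
    tminus P m μ β γ + (m * (1 + γ) / μ) * (k : ℝ) - m * γ * ((P : ℝ) - 1) / μ

/-- The forecasted cost `Ĉ(t | s) = c`, as a relation (the cases are mutually exclusive
for `t` distinct from all departure times of the strictly increasing profile `s`). -/
def Forecast (P : ℕ) (β γ m μ : ℝ) (s : ℕ → ℝ) (t c : ℝ) : Prop :=
  (∃ k, k + 1 < P ∧ s k < t ∧ t < s (k + 1) ∧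
      arr m μ s (k + 1) - arr m μ s k = m / μ ∧
      c = cost β γ m μ s k +
        (cost β γ m μ s (k + 1) - cost β γ m μ s k) / (s (k + 1) - s k) * (t - s k)) ∨
  (∃ k, k + 1 < P ∧ s k < t ∧ t < s (k + 1) ∧
      m / μ < arr m μ s (k + 1) - arr m μ s k ∧
      ((t ≤ arr m μ s k ∧
          c = cost β γ m μ s k +
            (sdc β γ (arr m μ s k) - cost β γ m μ s k) / (arr m μ s k - s k) * (t - s k)) ∨
        (arr m μ s k < t ∧ c = sdc β γ t))) ∨
  (s (P - 1) < t ∧ t < arr m μ s (P - 1) ∧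
      c = cost β γ m μ s (P - 1) +
        (sdc β γ (arr m μ s (P - 1)) - cost β γ m μ s (P - 1)) /
          (arr m μ s (P - 1) - s (P - 1)) * (t - s (P - 1))) ∨
  ((t < s 0 ∨ arr m μ s (P - 1) ≤ t) ∧ c = sdc β γ t)

/-- Departure times lie on the grid of integer multiples of `Δs` within `[-S, S]`. -/
def OnGrid (P : ℕ) (Δs S : ℝ) (s : ℕ → ℝ) : Prop :=
  ∀ k, k < P → (∃ z : ℤ, s k = (z : ℝ) * Δs) ∧ -S ≤ s k ∧ s k ≤ S

/-- A grid profile. -/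
def GridProfile (P : ℕ) (Δs S : ℝ) (s : ℕ → ℝ) : Prop :=
  IsProfile P s ∧ OnGrid P Δs S s

/-- One better response: the user at departure order `j` of `s` moves to the new time `t`
(whose forecasted cost in `s` is strictly below that user's current trip cost); `s'` is
the resulting profile, i.e. its departure times are those of `s` with `s j` replaced by `t`. -/
def BetterStep (P : ℕ) (β γ m μ : ℝ) (s s' : ℕ → ℝ) (j : ℕ) (t : ℝ) : Prop :=
  j < P ∧ (∀ k, k < P → s k ≠ t) ∧
  (∃ c, Forecast P β γ m μ s t c ∧ c < cost β γ m μ s j) ∧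
  Multiset.map s' (Finset.range P).val =
    t ::ₘ (Multiset.map s (Finset.range P).val).erase (s j)

/-- A better response path between grid profiles. -/
def BRPath (P : ℕ) (β γ m μ Δs S : ℝ) (s s' : ℕ → ℝ) : Prop :=
  ∃ (N : ℕ) (f : ℕ → ℕ → ℝ), f 0 = s ∧ f N = s' ∧
    (∀ i, i ≤ N → GridProfile P Δs S (f i)) ∧
    ∀ i, i < N → ∃ j t, BetterStep P β γ m μ (f i) (f (i + 1)) j t

/-!
If the users before `k` depart at their equilibrium times and no user up to `k` departs later
than at equilibrium, the queue never empties: user `k` arrives at `t⁻ + k·m/μ` (`eqArrival`)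
and pays `ρ + (s^e_k - s_k)`, hence exactly `ρ` on `s^e`.

If `s_n < s^e_n`, take the maximal run `n, …, j` of users departing before their equilibrium
times and move `j, j - 1, …, n` to their equilibrium times, in this order, which never changes
the departure order. The mover pays more than `ρ`, and the forecast at its new time
interpolates from that cost towards a value `≤ ρ`.

If `s_n > s^e_n`, the last user moves to `s^e_n`. Since arrivals are at least `m/μ` apart, it
pays at least `ρ`, and more than `ρ` if the bottleneck idles before `s_n`. The forecast at
`s^e_n` is below `ρ`, except when `s^e_n` falls into such an idle period, where it is
`V(s^e_n) ≤ ρ`.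
-/

noncomputable def eqArrival (P : ℕ) (m μ β γ : ℝ) (k : ℕ) : ℝ :=
  tminus P m μ β γ + k * (m / μ)

section ScheduleDelay

variable {β γ : ℝ}

lemma sdc_of_nonpos {d : ℝ} (h : d ≤ 0) : sdc β γ d = -(β * d) := by
  rw [sdc, max_eq_left (by linarith), max_eq_right h]
  ring

lemma sdc_of_nonneg {d : ℝ} (h : 0 ≤ d) : sdc β γ d = γ * d := by
  rw [sdc, max_eq_right (by linarith), max_eq_left h]
  ring

lemma mul_le_sdc (hβ : 0 ≤ β) (hγ : 0 ≤ γ) (d : ℝ) : γ * d ≤ sdc β γ d := by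
  have := mul_le_mul_of_nonneg_left (le_max_left d 0) hγ
  have := mul_nonneg hβ (le_max_right (-d) 0)
  rw [sdc]
  linarith

lemma sdc_le_sdc_add (hβ : 0 ≤ β) (hγ : 0 ≤ γ) {x y : ℝ} (hxy : x ≤ y) :
    sdc β γ x ≤ sdc β γ y + β * (y - x) := by
  have h₁ : max (-x) 0 ≤ max (-y) 0 + (y - x) :=
    max_le (by linarith [le_max_left (-y) (0 : ℝ)]) (by linarith [le_max_right (-y) (0 : ℝ)])
  have h₂ : max x 0 ≤ max y 0 := max_le_max hxy le_rfl
  rw [sdc, sdc]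
  nlinarith [mul_le_mul_of_nonneg_left h₁ hβ, mul_le_mul_of_nonneg_left h₂ hγ]

end ScheduleDelay

section Equilibrium

variable {P : ℕ} {m μ β γ : ℝ}

lemma eqArrival_succ (k : ℕ) :
    eqArrival P m μ β γ (k + 1) = eqArrival P m μ β γ k + m / μ := by
  rw [eqArrival, eqArrival]
  push_cast
  ring

lemma eqArrival_last (hP : 1 ≤ P) : eqArrival P m μ β γ (P - 1) = tplus P m μ β γ := by
  rw [eqArrival, tplus, Nat.cast_sub hP]
  ring

lemma le_floor_iff_eqArrival_nonpos (hm : 0 < m) (hμ : 0 < μ) (k : ℕ) :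
    (k : ℤ) ≤ ⌊γ * ((P : ℝ) - 1) / (β + γ)⌋ ↔ eqArrival P m μ β γ k ≤ 0 := by
  have hq : 0 < m / μ := div_pos hm hμ
  have h : eqArrival P m μ β γ k = (k - γ * ((P : ℝ) - 1) / (β + γ)) * (m / μ) := by
    rw [eqArrival, tminus]
    ring
  rw [Int.le_floor, h]
  push_cast
  constructor
  · intro hk
    exact mul_nonpos_of_nonpos_of_nonneg (by linarith) hq.le
  · intro hk
    by_contra hk'
    linarith [mul_pos (sub_pos.2 (not_le.1 hk')) hq]

lemma eqArrival_sub_se_add_sdc (hm : 0 < m) (hμ : 0 < μ) (hβ : 0 < β) (hγ : 0 < γ) (k : ℕ) :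
    (eqArrival P m μ β γ k - se P m μ β γ k) + sdc β γ (eqArrival P m μ β γ k) =
      rho P m μ β γ := by
  have hβγ : β + γ ≠ 0 := by positivity
  rw [se]
  split_ifs with h
  · rw [sdc_of_nonpos ((le_floor_iff_eqArrival_nonpos hm hμ k).1 h), eqArrival, tminus, rho]
    field_simp
    ring
  · have h' := mt (le_floor_iff_eqArrival_nonpos hm hμ k).2 h
    rw [sdc_of_nonneg (le_of_lt (not_le.1 h')), eqArrival, tminus, rho]
    field_simp
    ring

lemma eqArrival_sub_se (k : ℕ) :
    eqArrival P m μ β γ k - se P m μ β γ k =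
      if (k : ℤ) ≤ ⌊γ * ((P : ℝ) - 1) / (β + γ)⌋ then m / μ * β * k
      else m / μ * γ * ((P : ℝ) - 1 - k) := by
  rw [se]
  split_ifs <;> rw [eqArrival] <;> ring

lemma se_le_eqArrival (hm : 0 < m) (hμ : 0 < μ) (hβ : 0 < β) (hγ : 0 < γ) {k : ℕ}
    (hk : k < P) : se P m μ β γ k ≤ eqArrival P m μ β γ k := by
  have hkP : (k : ℝ) + 1 ≤ P := by exact_mod_cast hk
  rw [← sub_nonneg, eqArrival_sub_se]
  split_ifs
  · positivity
  · exact mul_nonneg (by positivity) (by linarith)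

lemma sdc_se_le_rho (hm : 0 < m) (hμ : 0 < μ) (hβ : 0 < β) (hβ₁ : β < 1) (hγ : 0 < γ)
    {k : ℕ} (hk : k < P) : sdc β γ (se P m μ β γ k) ≤ rho P m μ β γ := by
  have hle := se_le_eqArrival hm hμ hβ hγ hk
  have := sdc_le_sdc_add hβ.le hγ.le hle
  have := eqArrival_sub_se_add_sdc (P := P) hm hμ hβ hγ k
  nlinarith

lemma se_lt_se_succ (hm : 0 < m) (hμ : 0 < μ) (hβ : 0 < β) (hβ₁ : β < 1) (hγ : 0 < γ)
    (k : ℕ) : se P m μ β γ k < se P m μ β γ (k + 1) := by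
  have hq : 0 < m / μ := div_pos hm hμ
  have hq₁ : 0 < m * (1 - β) / μ := div_pos (by nlinarith) hμ
  have hq₂ : 0 < m * (1 + γ) / μ := div_pos (by nlinarith) hμ
  rw [se, se]
  push_cast
  split_ifs with h₁ h₂ h₂
  · linarith
  · have hβγ : 0 < β + γ := by positivity
    have hT : γ * ((P : ℝ) - 1) < ((k : ℝ) + 1) * (β + γ) := by
      have := Int.floor_lt.mp (lt_of_not_ge h₂)
      push_cast at this
      rwa [div_lt_iff₀ hβγ] at this
    have key : 0 < m / μ * (1 + γ + (β + γ) * k - γ * ((P : ℝ) - 1)) :=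
      mul_pos hq (by nlinarith)
    linarith [show m * (1 + γ) / μ * ((k : ℝ) + 1) - m * γ * ((P : ℝ) - 1) / μ
        - m * (1 - β) / μ * k = m / μ * (1 + γ + (β + γ) * k - γ * ((P : ℝ) - 1)) by ring]
  · exact absurd (le_trans (by omega) h₂) h₁
  · linarith

lemma se_strictMono (hm : 0 < m) (hμ : 0 < μ) (hβ : 0 < β) (hβ₁ : β < 1) (hγ : 0 < γ) :
    StrictMono (se P m μ β γ) :=
  strictMono_nat_of_lt_succ (se_lt_se_succ hm hμ hβ hβ₁ hγ)

lemma se_zero (hP : 1 ≤ P) (hβ : 0 < β) (hγ : 0 < γ) :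
    se P m μ β γ 0 = tminus P m μ β γ := by
  have hP' : (1 : ℝ) ≤ P := by exact_mod_cast hP
  have hT : (0 : ℝ) ≤ γ * ((P : ℝ) - 1) / (β + γ) :=
    div_nonneg (mul_nonneg hγ.le (by linarith)) (by positivity)
  rw [se, if_pos (Int.le_floor.mpr (by exact_mod_cast hT))]
  simp

lemma se_last (hP : 2 ≤ P) (hβ : 0 < β) (hγ : 0 < γ) :
    se P m μ β γ (P - 1) = tplus P m μ β γ := by
  have hP' : (2 : ℝ) ≤ P := by exact_mod_cast hP
  have hcast : ((P - 1 : ℕ) : ℝ) = (P : ℝ) - 1 := by rw [Nat.cast_sub (by omega)]; simp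
  have hT : γ * ((P : ℝ) - 1) / (β + γ) < ((P - 1 : ℕ) : ℝ) := by
    rw [hcast, div_lt_iff₀ (by positivity)]
    nlinarith
  rw [se, if_neg (not_le.mpr (Int.floor_lt.mpr (by exact_mod_cast hT))), hcast, tplus]
  ring

lemma gamma_mul_tplus (hμ : 0 < μ) (hβ : 0 < β) (hγ : 0 < γ) :
    γ * tplus P m μ β γ = rho P m μ β γ := by
  have hβγ : β + γ ≠ 0 := by positivity
  have hμ₀ : μ ≠ 0 := hμ.ne'
  rw [tplus, tminus, rho]
  field_simp
  ring

lemma tplus_pos (hP : 2 ≤ P) (hm : 0 < m) (hμ : 0 < μ) (hβ : 0 < β) (hγ : 0 < γ) :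
    0 < tplus P m μ β γ := by
  have hP' : (2 : ℝ) ≤ P := by exact_mod_cast hP
  have h₁ : 0 < m * ((P : ℝ) - 1) / μ := div_pos (mul_pos hm (by linarith)) hμ
  have h₂ : γ / (β + γ) < 1 := by rw [div_lt_one (by positivity)]; linarith
  rw [tplus, tminus]
  nlinarith

lemma onGrid_se {Δs S : ℝ} (hP : 2 ≤ P) (hm : 0 < m) (hμ : 0 < μ) (hβ : 0 < β) (hβ₁ : β < 1)
    (hγ : 0 < γ) (hgse : ∀ k, k < P → ∃ z : ℤ, se P m μ β γ k = (z : ℝ) * Δs)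
    (hSt : -S < tminus P m μ β γ) (hStp : tplus P m μ β γ < S) :
    OnGrid P Δs S (se P m μ β γ) := by
  have hmono := (se_strictMono (P := P) hm hμ hβ hβ₁ hγ).monotone
  intro k hk
  refine ⟨hgse k hk, ?_, ?_⟩
  · linarith [se_zero (P := P) (m := m) (μ := μ) (by omega) hβ hγ, hmono (Nat.zero_le k)]
  · linarith [se_last (m := m) (μ := μ) hP hβ hγ, hmono (show k ≤ P - 1 by omega)]

end Equilibrium

section Arrival

variable {P : ℕ} {m μ β γ : ℝ} {s : ℕ → ℝ}

lemma le_arr (k : ℕ) : s k ≤ arr m μ s k := by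
  cases k with
  | zero => exact le_rfl
  | succ k => exact le_max_right _ _

lemma arr_succ (k : ℕ) : arr m μ s (k + 1) = max (arr m μ s k + m / μ) (s (k + 1)) := rfl

lemma arr_add_le (k l : ℕ) : arr m μ s k + l * (m / μ) ≤ arr m μ s (k + l) := by
  induction l with
  | zero => simp
  | succ l ih =>
    rw [← add_assoc, arr_succ]
    push_cast
    linarith [le_max_left (arr m μ s (k + l) + m / μ) (s (k + l + 1))]

lemma arr_eq_eqArrival {k : ℕ} (h₀ : s 0 = tminus P m μ β γ)
    (hle : ∀ i, 1 ≤ i → i ≤ k → s i ≤ eqArrival P m μ β γ i) :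
    arr m μ s k = eqArrival P m μ β γ k := by
  induction k with
  | zero => simp [arr, h₀, eqArrival]
  | succ k ih =>
    rw [arr_succ, ih fun i h₁ h₂ => hle i h₁ (by omega), ← eqArrival_succ,
      max_eq_left (hle (k + 1) (by omega) le_rfl)]

lemma arr_eq_eqArrival_of_le_se (hm : 0 < m) (hμ : 0 < μ) (hβ : 0 < β) (hγ : 0 < γ) {k : ℕ}
    (hk : k < P) (h₀ : s 0 = se P m μ β γ 0) (hle : ∀ i, i ≤ k → s i ≤ se P m μ β γ i) :
    arr m μ s k = eqArrival P m μ β γ k :=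
  arr_eq_eqArrival (h₀.trans (se_zero (by omega) hβ hγ)) fun i _ hi =>
    (hle i hi).trans (se_le_eqArrival hm hμ hβ hγ (by omega))

lemma cost_eq_rho_add (hm : 0 < m) (hμ : 0 < μ) (hβ : 0 < β) (hγ : 0 < γ) {k : ℕ}
    (h : arr m μ s k = eqArrival P m μ β γ k) :
    cost β γ m μ s k = rho P m μ β γ + (se P m μ β γ k - s k) := by
  rw [cost, h, ← eqArrival_sub_se_add_sdc hm hμ hβ hγ k]
  ring

lemma rho_add_le_cost_last (hμ : 0 < μ) (hβ : 0 < β) (hγ : 0 < γ) {k : ℕ}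
    (hk : k < P) :
    rho P m μ β γ + γ * (arr m μ s k - eqArrival P m μ β γ k) ≤ cost β γ m μ s (P - 1) := by
  have hchain := arr_add_le (m := m) (μ := μ) (s := s) k (P - 1 - k)
  have hlast : eqArrival P m μ β γ k + ((P - 1 - k : ℕ) : ℝ) * (m / μ) = tplus P m μ β γ := by
    rw [← eqArrival_last (m := m) (μ := μ) (β := β) (γ := γ) (by omega), eqArrival, eqArrival,
      Nat.cast_sub (by omega)]
    ring
  rw [show k + (P - 1 - k) = P - 1 by omega] at hchain
  have := mul_le_sdc hβ.le hγ.le (arr m μ s (P - 1))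
  have := le_arr (m := m) (μ := μ) (s := s) (P - 1)
  rw [cost, ← gamma_mul_tplus (m := m) hμ hβ hγ]
  nlinarith

end Arrival

section Forecast

variable {P : ℕ} {β γ m μ : ℝ} {s : ℕ → ℝ} {k : ℕ} {t : ℝ}

lemma lerp_lt_left {x₀ x₁ c₀ c₁ : ℝ} (hc : c₁ < c₀) (hx : x₀ < x₁) (ht : x₀ < t) :
    c₀ + (c₁ - c₀) / (x₁ - x₀) * (t - x₀) < c₀ := by
  have : (c₁ - c₀) / (x₁ - x₀) < 0 := div_neg_of_neg_of_pos (by linarith) (by linarith)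
  linarith [mul_neg_of_neg_of_pos this (sub_pos.2 ht)]

lemma exists_forecast_lt_cost_of_congested (hk : k + 1 < P) (ht₀ : s k < t)
    (ht₁ : t < s (k + 1)) (hcong : arr m μ s (k + 1) - arr m μ s k = m / μ)
    (hcost : cost β γ m μ s (k + 1) < cost β γ m μ s k) :
    ∃ c, Forecast P β γ m μ s t c ∧ c < cost β γ m μ s k :=
  ⟨_, Or.inl ⟨k, hk, ht₀, ht₁, hcong, rfl⟩, lerp_lt_left hcost (ht₀.trans ht₁) ht₀⟩

lemma exists_forecast_lt_cost_of_le_arr (hk : k + 1 < P) (ht₀ : s k < t)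
    (ht₁ : t < s (k + 1)) (hgap : m / μ < arr m μ s (k + 1) - arr m μ s k)
    (ht : t ≤ arr m μ s k) :
    ∃ c, Forecast P β γ m μ s t c ∧ c < cost β γ m μ s k :=
  ⟨_, Or.inr (Or.inl ⟨k, hk, ht₀, ht₁, hgap, Or.inl ⟨ht, rfl⟩⟩),
    lerp_lt_left (by rw [cost]; linarith) (ht₀.trans_le ht) ht₀⟩

end Forecast

section Reindexing

variable {α : Type*} {P : ℕ}

def insertAt (g : ℕ → α) (n : ℕ) (t : α) : ℕ → α :=
  fun k => if k < n then g k else if k = n then t else g (k - 1)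

lemma map_update_range [DecidableEq α] (g : ℕ → α) (t : α) {j : ℕ} (hj : j < P) :
    (Multiset.range P).map (Function.update g j t) =
      t ::ₘ ((Multiset.range P).map g).erase (g j) := by
  have hR : Multiset.range P = j ::ₘ (Multiset.range P).erase j :=
    (Multiset.cons_erase (Multiset.mem_range.2 hj)).symm
  rw [hR, Multiset.map_cons, Multiset.map_cons, Multiset.erase_cons_head, Function.update_self]
  congr 1
  refine Multiset.map_congr rfl fun x hx => Function.update_of_ne ?_ _ _
  rintro rfl
  exact (Multiset.nodup_range P).not_mem_erase hx

lemma map_insertAt_range (g : ℕ → α) (t : α) {n Q : ℕ} (hn : n ≤ Q) :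
    (Multiset.range (Q + 1)).map (insertAt g n t) = t ::ₘ (Multiset.range Q).map g := by
  induction Q, hn using Nat.le_induction with
  | base =>
    rw [Multiset.range_succ, Multiset.map_cons]
    simp only [insertAt, lt_irrefl, if_false, if_true]
    congr 1
    exact Multiset.map_congr rfl fun x hx => if_pos (Multiset.mem_range.1 hx)
  | succ Q hnQ ih =>
    rw [Multiset.range_succ, Multiset.map_cons, ih, Multiset.range_succ Q, Multiset.map_cons,
      Multiset.cons_swap]
    simp only [insertAt, if_neg (show ¬Q + 1 < n by omega), if_neg (show Q + 1 ≠ n by omega),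
      Nat.add_sub_cancel]

lemma map_insertAt_range_eq_cons_erase [DecidableEq α] (g : ℕ → α) (t : α) {n : ℕ}
    (hn : n < P) :
    (Multiset.range P).map (insertAt g n t) =
      t ::ₘ ((Multiset.range P).map g).erase (g (P - 1)) := by
  obtain ⟨Q, rfl⟩ : ∃ Q, P = Q + 1 := ⟨P - 1, by omega⟩
  rw [map_insertAt_range g t (by omega), Multiset.range_succ, Multiset.map_cons,
    Nat.add_sub_cancel, Multiset.erase_cons_head]

end Reindexing

section Profiles

variable {P : ℕ} {g : ℕ → ℝ}

lemma IsProfile.le_of_le (hg : IsProfile P g) {k l : ℕ} (hkl : k ≤ l) (hl : l < P) :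
    g k ≤ g l :=
  (strictMonoOn_Iic_of_lt_succ (n := P - 1) fun i hi => by simpa using hg i (by omega)).monotoneOn
    (by simp; omega) (by simp; omega) hkl

lemma IsProfile.update (hg : IsProfile P g) {j : ℕ} {t : ℝ} (hlo : ∀ i, i + 1 = j → g i < t)
    (hhi : j + 1 < P → t < g (j + 1)) : IsProfile P (Function.update g j t) := by
  intro i hi
  simp only [Function.update_apply]
  split_ifs with h₁ h₂ h₂
  · omega
  · subst h₁
    exact hhi hi
  · exact hlo i h₂
  · exact hg i hi

lemma IsProfile.insertAt (hg : IsProfile P g) {n : ℕ} {t : ℝ} (hlo : ∀ i, i + 1 = n → g i < t)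
    (hhi : t < g n) : IsProfile P (insertAt g n t) := by
  intro i hi
  simp only [_root_.insertAt]
  split_ifs with h₁ h₂ h₃ h₄ <;> try omega
  · exact hg i hi
  · exact hlo i h₃
  · obtain rfl : i = n := by omega
    simpa using hhi
  · simpa [show i - 1 + 1 = i by omega] using hg (i - 1) (by omega)

variable {Δs S : ℝ} {e : ℕ → ℝ}

lemma OnGrid.update (hg : OnGrid P Δs S g) (he : OnGrid P Δs S e) (j : ℕ) :
    OnGrid P Δs S (Function.update g j (e j)) := by
  intro k hk
  rcases eq_or_ne k j with rfl | h
  · simpa using he k hk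
  · simpa [h] using hg k hk

lemma OnGrid.insertAt (hg : OnGrid P Δs S g) (he : OnGrid P Δs S e) (n : ℕ) :
    OnGrid P Δs S (insertAt g n (e n)) := by
  intro k hk
  simp only [_root_.insertAt]
  split_ifs with h₁ h₂
  · exact hg k hk
  · exact h₂ ▸ he k hk
  · exact hg (k - 1) (by omega)

end Profiles

section BetterResponse

variable {P : ℕ} {m μ β γ : ℝ} {g : ℕ → ℝ}

lemma betterStep_update_se (hP : 2 ≤ P) (hm : 0 < m) (hμ : 0 < μ) (hβ : 0 < β) (hβ₁ : β < 1)
    (hγ : 0 < γ) (hg : IsProfile P g) {j : ℕ} (hj : j < P) (h₀ : g 0 = se P m μ β γ 0)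
    (hle : ∀ i, i ≤ j → g i ≤ se P m μ β γ i) (hlt : g j < se P m μ β γ j)
    (hnext : j + 1 < P → se P m μ β γ (j + 1) ≤ g (j + 1)) :
    BetterStep P β γ m μ g (Function.update g j (se P m μ β γ j)) j (se P m μ β γ j) := by
  set e := se P m μ β γ
  have he := se_strictMono (P := P) hm hμ hβ hβ₁ hγ
  have harr : arr m μ g j = eqArrival P m μ β γ j :=
    arr_eq_eqArrival_of_le_se hm hμ hβ hγ hj h₀ hle
  have hcost : cost β γ m μ g j = rho P m μ β γ + (e j - g j) :=
    cost_eq_rho_add hm hμ hβ hγ harr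
  have hfree : ∀ k, k < P → g k ≠ e j := by
    intro k hk
    rcases lt_or_ge j k with hjk | hkj
    · exact ((he (lt_add_one j)).trans_le
        ((hnext (by omega)).trans (hg.le_of_le hjk hk))).ne'
    · rcases hkj.lt_or_eq with hkj | rfl
      · exact ((hle k hkj.le).trans_lt (he hkj)).ne
      · exact hlt.ne
  refine ⟨hj, hfree, ?_, by rw [Finset.range_val]; exact map_update_range g _ hj⟩
  rcases (Nat.succ_le_of_lt hj).lt_or_eq with hj₁ | hj₁
  · have ht₁ : e j < g (j + 1) := (he (lt_add_one j)).trans_le (hnext hj₁)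
    rcases le_or_gt (g (j + 1)) (arr m μ g j + m / μ) with hcong | hgap
    · have harr₁ : arr m μ g (j + 1) = eqArrival P m μ β γ (j + 1) := by
        rw [arr_succ, max_eq_left hcong, harr, eqArrival_succ]
      refine exists_forecast_lt_cost_of_congested hj₁ hlt ht₁
        (by rw [harr₁, harr, eqArrival_succ]; ring) ?_
      rw [cost_eq_rho_add hm hμ hβ hγ harr₁, hcost]
      linarith [hnext hj₁]
    · exact exists_forecast_lt_cost_of_le_arr hj₁ hlt ht₁
        (by rw [arr_succ, max_eq_right hgap.le]; linarith)
        (harr ▸ se_le_eqArrival hm hμ hβ hγ hj)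
  · have hlast : j = P - 1 := by omega
    have het : e j = tplus P m μ β γ := hlast ▸ se_last hP hβ hγ
    refine ⟨_, Or.inr (Or.inr (Or.inr ⟨Or.inr ?_, rfl⟩)), ?_⟩
    · rw [← hlast, harr, het, hlast, eqArrival_last (by omega)]
    · rw [het, sdc_of_nonneg (tplus_pos hP hm hμ hβ hγ).le, gamma_mul_tplus hμ hβ hγ, hcost]
      linarith

lemma betterStep_insertAt_se (hm : 0 < m) (hμ : 0 < μ) (hβ : 0 < β) (hβ₁ : β < 1)
    (hγ : 0 < γ) (hg : IsProfile P g) {n : ℕ} (hn : 1 ≤ n) (hnP : n < P)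
    (hpre : ∀ k, k < n → g k = se P m μ β γ k) (hgt : se P m μ β γ n < g n) :
    BetterStep P β γ m μ g (insertAt g n (se P m μ β γ n)) (P - 1) (se P m μ β γ n) := by
  obtain ⟨n, rfl⟩ : ∃ n', n = n' + 1 := ⟨n - 1, by omega⟩
  set e := se P m μ β γ
  have he := se_strictMono (P := P) hm hμ hβ hβ₁ hγ
  have harr : arr m μ g n = eqArrival P m μ β γ n :=
    arr_eq_eqArrival_of_le_se hm hμ hβ hγ (by omega) (hpre 0 (by omega))
      fun i hi => (hpre i (by omega)).le
  have hcost : cost β γ m μ g n = rho P m μ β γ := by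
    rw [cost_eq_rho_add hm hμ hβ hγ harr, hpre n (by omega), sub_self, add_zero]
  have hlast := rho_add_le_cost_last (m := m) (s := g) hμ hβ hγ hnP
  have ht₀ : g n < e (n + 1) := hpre n (by omega) ▸ he (lt_add_one n)
  have hfree : ∀ k, k < P → g k ≠ e (n + 1) := by
    intro k hk
    rcases lt_or_ge k (n + 1) with hkn | hnk
    · exact hpre k hkn ▸ (he hkn).ne
    · exact (hgt.trans_le (hg.le_of_le hnk hk)).ne'
  refine ⟨by omega, hfree, ?_,
    by rw [Finset.range_val]; exact map_insertAt_range_eq_cons_erase g _ hnP⟩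
  rcases le_or_gt (g (n + 1)) (arr m μ g n + m / μ) with hcong | hgap
  · have harr₁ : arr m μ g (n + 1) = eqArrival P m μ β γ (n + 1) := by
      rw [arr_succ, max_eq_left hcong, harr, eqArrival_succ]
    obtain ⟨c, hc, hlt⟩ := exists_forecast_lt_cost_of_congested hnP ht₀ hgt
      (by rw [harr₁, harr, eqArrival_succ]; ring)
      (by rw [cost_eq_rho_add hm hμ hβ hγ harr₁, hcost]; linarith)
    rw [harr₁, sub_self, mul_zero, add_zero] at hlast
    exact ⟨c, hc, by linarith⟩
  · have harr₁ : arr m μ g (n + 1) = g (n + 1) := by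
      rw [arr_succ, max_eq_right hgap.le]
    have hgap' : m / μ < arr m μ g (n + 1) - arr m μ g n := by
      rw [harr₁]
      linarith
    have hρ : rho P m μ β γ < cost β γ m μ g (P - 1) := by
      rw [harr₁, eqArrival_succ, ← harr] at hlast
      nlinarith
    rcases le_or_gt (e (n + 1)) (arr m μ g n) with hshadow | hidle
    · obtain ⟨c, hc, hlt⟩ := exists_forecast_lt_cost_of_le_arr hnP ht₀ hgt hgap' hshadow
      exact ⟨c, hc, by linarith⟩
    · exact ⟨_, Or.inr (Or.inl ⟨n, hnP, ht₀, hgt, hgap', Or.inr ⟨hidle, rfl⟩⟩),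
        (sdc_se_le_rho hm hμ hβ hβ₁ hγ hnP).trans_lt hρ⟩

end BetterResponse

lemma Relation.ReflTransGen.exists_seq {α : Type*} {r : α → α → Prop} {a b : α}
    (h : Relation.ReflTransGen r a b) :
    ∃ (N : ℕ) (f : ℕ → α), f 0 = a ∧ f N = b ∧ ∀ i, i < N → r (f i) (f (i + 1)) := by
  induction h using Relation.ReflTransGen.head_induction_on with
  | refl => exact ⟨0, fun _ => b, rfl, rfl, fun i hi => absurd hi (Nat.not_lt_zero i)⟩
  | @head a c hac _ ih =>
    obtain ⟨N, f, hf₀, hfN, hf⟩ := ih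
    refine ⟨N + 1, fun i => if i = 0 then a else f (i - 1), rfl, by simpa using hfN, ?_⟩
    rintro (_ | i) hi
    · simpa [hf₀] using hac
    · simpa using hf i (by omega)

lemma exists_maximal_run (p : ℕ → Prop) {n P : ℕ} (hnP : n < P) (hn : p n) :
    ∃ j, n ≤ j ∧ j < P ∧ (∀ i, n ≤ i → i ≤ j → p i) ∧ (j + 1 < P → ¬p (j + 1)) := by
  obtain ⟨d, rfl⟩ : ∃ d, P = n + 1 + d := ⟨P - n - 1, by omega⟩
  clear hnP
  induction d generalizing n with
  | zero => exact ⟨n, le_rfl, by omega, fun i h₁ h₂ => le_antisymm h₂ h₁ ▸ hn, by omega⟩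
  | succ d ih =>
    by_cases hn₁ : p (n + 1)
    · obtain ⟨j, hj, hjP, hrun, hend⟩ := ih hn₁
      refine ⟨j, by omega, by omega, fun i h₁ h₂ => ?_, fun h => hend (by omega)⟩
      rcases h₁.lt_or_eq with h₁ | rfl
      · exact hrun i h₁ h₂
      · exact hn
    · exact ⟨n, le_rfl, by omega, fun i h₁ h₂ => le_antisymm h₂ h₁ ▸ hn, fun _ => hn₁⟩

def OrderedStep (P : ℕ) (β γ m μ Δs S : ℝ) (n : ℕ) (g g' : ℕ → ℝ) : Prop :=
  (∃ j t, BetterStep P β γ m μ g g' j t ∧ n ≤ j ∧ se P m μ β γ (n - 1) < t) ∧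
    GridProfile P Δs S g' ∧ ∀ k, k < n → g' k = se P m μ β γ k

section OrderedPath

variable {P : ℕ} {m μ β γ Δs S : ℝ} {g : ℕ → ℝ} {n : ℕ}

lemma orderedStep_update_se (hP : 2 ≤ P) (hm : 0 < m) (hμ : 0 < μ) (hβ : 0 < β) (hβ₁ : β < 1)
    (hγ : 0 < γ) (hse : OnGrid P Δs S (se P m μ β γ)) (hg : GridProfile P Δs S g)
    (hpre : ∀ k, k < n → g k = se P m μ β γ k) (hn : 1 ≤ n) {j : ℕ} (hnj : n ≤ j) (hj : j < P)
    (hrun : ∀ i, n ≤ i → i ≤ j → g i < se P m μ β γ i)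
    (hnext : j + 1 < P → se P m μ β γ (j + 1) ≤ g (j + 1)) :
    OrderedStep P β γ m μ Δs S n g (Function.update g j (se P m μ β γ j)) := by
  have he := se_strictMono (P := P) hm hμ hβ hβ₁ hγ
  have hle : ∀ i, i ≤ j → g i ≤ se P m μ β γ i := fun i hi =>
    if h : i < n then (hpre i h).le else (hrun i (by omega) hi).le
  refine ⟨⟨j, _, betterStep_update_se hP hm hμ hβ hβ₁ hγ hg.1 hj (hpre 0 (by omega)) hle
      (hrun j hnj le_rfl) hnext, hnj, he (by omega)⟩,
    ⟨hg.1.update (fun i hi => (hle i (by omega)).trans_lt (he (by omega)))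
      (fun h => (he (lt_add_one j)).trans_le (hnext h)), hg.2.update hse j⟩,
    fun k hk => ?_⟩
  rw [Function.update_of_ne (by omega)]
  exact hpre k hk

lemma exists_reflTransGen_of_run (hP : 2 ≤ P) (hm : 0 < m) (hμ : 0 < μ) (hβ : 0 < β)
    (hβ₁ : β < 1) (hγ : 0 < γ) (hse : OnGrid P Δs S (se P m μ β γ)) (hn : 1 ≤ n) {j : ℕ}
    (hnj : n ≤ j) (hg : GridProfile P Δs S g) (hpre : ∀ k, k < n → g k = se P m μ β γ k)
    (hj : j < P) (hrun : ∀ i, n ≤ i → i ≤ j → g i < se P m μ β γ i)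
    (hnext : j + 1 < P → se P m μ β γ (j + 1) ≤ g (j + 1)) :
    ∃ g', Relation.ReflTransGen (OrderedStep P β γ m μ Δs S n) g g' ∧
      ∀ k, k ≤ n → g' k = se P m μ β γ k := by
  induction j, hnj using Nat.le_induction generalizing g with
  | base =>
    refine ⟨_, .single (orderedStep_update_se hP hm hμ hβ hβ₁ hγ hse hg hpre hn le_rfl hj hrun
      hnext), fun k hk => ?_⟩
    rcases hk.lt_or_eq with hk | rfl
    · rw [Function.update_of_ne (by omega)]
      exact hpre k hk
    · exact Function.update_self ..
  | succ j hnj ih =>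
    have hstep := orderedStep_update_se hP hm hμ hβ hβ₁ hγ hse hg hpre hn (by omega) hj hrun hnext
    obtain ⟨g', hpath, hfin⟩ := ih hstep.2.1 hstep.2.2 (by omega)
      (fun i h₁ h₂ => by rw [Function.update_of_ne (by omega)]; exact hrun i h₁ (by omega))
      (fun _ => by rw [Function.update_self])
    exact ⟨g', hpath.head hstep, hfin⟩

lemma orderedStep_insertAt_se (hm : 0 < m) (hμ : 0 < μ) (hβ : 0 < β) (hβ₁ : β < 1)
    (hγ : 0 < γ) (hse : OnGrid P Δs S (se P m μ β γ)) (hg : GridProfile P Δs S g)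
    (hpre : ∀ k, k < n → g k = se P m μ β γ k) (hn : 1 ≤ n) (hnP : n < P)
    (hgt : se P m μ β γ n < g n) :
    OrderedStep P β γ m μ Δs S n g (insertAt g n (se P m μ β γ n)) := by
  have he := se_strictMono (P := P) hm hμ hβ hβ₁ hγ
  refine ⟨⟨P - 1, _, betterStep_insertAt_se hm hμ hβ hβ₁ hγ hg.1 hn hnP hpre hgt, by omega,
      he (by omega)⟩,
    ⟨hg.1.insertAt (fun i hi => hpre i (by omega) ▸ he (by omega)) hgt, hg.2.insertAt hse n⟩,
    fun k hk => ?_⟩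
  simp only [insertAt, if_pos hk]
  exact hpre k hk

lemma exists_reflTransGen_orderedStep (hP : 2 ≤ P) (hm : 0 < m) (hμ : 0 < μ) (hβ : 0 < β)
    (hβ₁ : β < 1) (hγ : 0 < γ) (hse : OnGrid P Δs S (se P m μ β γ))
    (hg : GridProfile P Δs S g) (hpre : ∀ k, k < n → g k = se P m μ β γ k) (hn : 1 ≤ n)
    (hnP : n < P) :
    ∃ g', Relation.ReflTransGen (OrderedStep P β γ m μ Δs S n) g g' ∧
      ∀ k, k ≤ n → g' k = se P m μ β γ k := by
  rcases lt_trichotomy (g n) (se P m μ β γ n) with hlt | heq | hgt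
  · obtain ⟨j, hnj, hjP, hrun, hend⟩ := exists_maximal_run (fun i => g i < se P m μ β γ i) hnP hlt
    exact exists_reflTransGen_of_run hP hm hμ hβ hβ₁ hγ hse hn hnj hg hpre hjP hrun
      fun h => not_lt.1 (hend h)
  · refine ⟨g, .refl, fun k hk => ?_⟩
    rcases hk.lt_or_eq with hk | rfl
    · exact hpre k hk
    · exact heq
  · refine ⟨_, .single (orderedStep_insertAt_se hm hμ hβ hβ₁ hγ hse hg hpre hn hnP hgt),
      fun k hk => ?_⟩
    rcases hk.lt_or_eq with hk | rfl
    · simp only [insertAt, if_pos hk]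
      exact hpre k hk
    · simp [insertAt]

end OrderedPath

theorem ordered_path_extension_general (P : ℕ) (hP : 2 ≤ P) (m μ β γ Δs S : ℝ)
    (hm : 0 < m) (hμ : 0 < μ)
    (hβ : 0 < β) (hβ1 : β < 1) (hγ : 0 < γ)
    (hgse : ∀ k, k < P → ∃ z : ℤ, se P m μ β γ k = (z : ℝ) * Δs)
    (hSt : -S < tminus P m μ β γ) (hStp : tplus P m μ β γ < S)
    (s : ℕ → ℝ) (hgrid : GridProfile P Δs S s)
    (n : ℕ) (hn : 1 ≤ n) (hnP : n < P)
    (heqn : ∀ k, k < n → s k = se P m μ β γ k) :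
    ∃ (N : ℕ) (f : ℕ → ℕ → ℝ),
      f 0 = s ∧
      (∀ i, i ≤ N → GridProfile P Δs S (f i)) ∧
      (∀ i, i < N → ∃ j t, BetterStep P β γ m μ (f i) (f (i + 1)) j t ∧
        n ≤ j ∧ se P m μ β γ (n - 1) < t) ∧
      (∀ i, i ≤ N → ∀ k, k < n → f i k = se P m μ β γ k) ∧
      (∀ k, k < n + 1 → f N k = se P m μ β γ k) := by
  obtain ⟨g, hpath, hfin⟩ := exists_reflTransGen_orderedStep hP hm hμ hβ hβ1 hγ
    (onGrid_se hP hm hμ hβ hβ1 hγ hgse hSt hStp) hgrid heqn hn hnP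
  obtain ⟨N, f, hf₀, hfN, hf⟩ := hpath.exists_seq
  have hgood : ∀ i, i ≤ N → GridProfile P Δs S (f i) ∧ ∀ k, k < n → f i k = se P m μ β γ k := by
    rintro (_ | i) hi
    · exact hf₀ ▸ ⟨hgrid, heqn⟩
    · exact (hf i hi).2
  exact ⟨N, f, hf₀, fun i hi => (hgood i hi).1, fun i hi => (hf i hi).1,
    fun i hi => (hgood i hi).2, fun k hk => hfN ▸ hfin k (by omega)⟩

theorem ordered_path_extension (P : ℕ) (hP : 2 ≤ P) (m μ β γ Δs S : ℝ)
    (hm : 0 < m) (hm1 : m ≤ 1) (hμ : 0 < μ)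
    (hβ : 0 < β) (hβ1 : β < 1) (hγ : 0 < γ)
    (hΔs : 0 < Δs) (hS : 0 < S)
    (hgm : ∃ z : ℤ, m / μ = (z : ℝ) * Δs)
    (hgt : ∃ z : ℤ, tminus P m μ β γ = (z : ℝ) * Δs)
    (hgtp : ∃ z : ℤ, tplus P m μ β γ = (z : ℝ) * Δs)
    (hgse : ∀ k, k < P → ∃ z : ℤ, se P m μ β γ k = (z : ℝ) * Δs)
    (hSt : -S < tminus P m μ β γ) (hStp : tplus P m μ β γ < S)
    (s : ℕ → ℝ) (hgrid : GridProfile P Δs S s)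
    (n : ℕ) (hn : 1 ≤ n) (hnP : n < P)
    (heqn : ∀ k, k < n → s k = se P m μ β γ k) :
    ∃ (N : ℕ) (f : ℕ → ℕ → ℝ),
      f 0 = s ∧
      (∀ i, i ≤ N → GridProfile P Δs S (f i)) ∧
      (∀ i, i < N → ∃ j t, BetterStep P β γ m μ (f i) (f (i + 1)) j t ∧
        n ≤ j ∧ se P m μ β γ (n - 1) < t) ∧
      (∀ i, i ≤ N → ∀ k, k < n → f i k = se P m μ β γ k) ∧
      (∀ k, k < n + 1 → f N k = se P m μ β γ k) :=
  ordered_path_extension_general P hP m μ β γ Δs S hm hμ hβ hβ1 hγ hgse hSt hStp s hgrid n hn hnP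
    heqn
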